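/- arXiv:1903.11184 — 5 statements merged into one kernel-verified Lean document; each statement's English description precedes it below -/
import Mathlib

section
/- Let n ≥ 1, let f : ℝⁿ → ℝ be convex, let x̄ ∈ ℝⁿ and let ε ≥ 0, η ≥ 0. Then a vector g ∈ ℝⁿ is an (ε,η)-subgradient of f at x̄ if and only if there exists an ε-subgradient ḡ of f at x̄ with ‖g − ḡ‖ ≤ η. (This is Lemma 4.3 of the paper: ∂_ε^η f(x̄) equals the sum of ∂_ε f(x̄) and the closed ball of radius η.) -/
open scoped RealInnerProductSpace

private theorem le_of_forall_pos_le_add' {a b : ℝ} (h : ∀ δ : ℝ, 0 < δ → a ≤ b + δ) : a ≤ b :=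
  le_of_forall_sub_le fun δ hδ => by linarith [h δ hδ]

/-- A finite everywhere-defined convex function on a finite-dimensional real inner product
space has a subgradient at `0`. -/
theorem exists_subgradient_at_zero
    {E : Type*} [NormedAddCommGroup E] [InnerProductSpace ℝ E] [FiniteDimensional ℝ E]
    (χ : E → ℝ) (hχ : ConvexOn ℝ Set.univ χ) :
    ∃ w : E, ∀ d, χ 0 + ⟪w, d⟫ ≤ χ d := by
  have hcont : Continuous χ := hχ.locallyLipschitz.continuous
  set S : Set (E × ℝ) := {p | χ p.1 < p.2} with hS
  have hSo : IsOpen S := isOpen_lt (hcont.comp continuous_fst) continuous_snd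
  have hSc : Convex ℝ S := by
    rintro p hp q hq a b ha hb hab
    simp only [hS, Set.mem_setOf_eq] at hp hq ⊢
    have h1 : χ (a • p.1 + b • q.1) ≤ a * χ p.1 + b * χ q.1 :=
      hχ.2 (Set.mem_univ _) (Set.mem_univ _) ha hb hab
    have hfst : (a • p + b • q).1 = a • p.1 + b • q.1 := rfl
    have hsnd : (a • p + b • q).2 = a * p.2 + b * q.2 := rfl
    rw [hfst, hsnd]
    have h2 : a * χ p.1 + b * χ q.1 < a * p.2 + b * q.2 := by
      rcases ha.eq_or_lt with h0 | ha'
      · have hb1 : b = 1 := by linarith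
        rw [← h0, hb1]
        simpa using hq
      · have h3 : a * χ p.1 < a * p.2 := mul_lt_mul_of_pos_left hp ha'
        have h4 : b * χ q.1 ≤ b * q.2 := mul_le_mul_of_nonneg_left hq.le hb
        linarith
    linarith
  have hx : ((0 : E), χ 0) ∉ S := by simp [hS]
  obtain ⟨L, hL⟩ := geometric_hahn_banach_open_point hSc hSo hx
  set c := L (0, 1) with hc_def
  have hsplit : ∀ (d : E) (r : ℝ), L (d, r) = L (d, 0) + r * c := by
    intro d r
    have hdr : (d, r) = (d, (0 : ℝ)) + r • ((0 : E), (1 : ℝ)) := by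
      simp [Prod.ext_iff]
    rw [hdr, map_add, map_smul, smul_eq_mul, hc_def]
  have hcne0 : ∀ r : ℝ, L ((0 : E), r) = L ((0 : E), 0) + r * c := fun r => hsplit 0 r
  have hc : c < 0 := by
    have h := hL ((0 : E), χ 0 + 1) (by simp [hS])
    rw [hsplit 0 (χ 0 + 1), hsplit 0 (χ 0)] at h
    linarith
  have key : ∀ d, L (d, 0) + χ d * c ≤ L (0, 0) + χ 0 * c := by
    intro d
    refine le_of_forall_pos_le_add' fun δ hδ => ?_
    have ht : (0 : ℝ) < δ / (-c) := div_pos hδ (by linarith)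
    have h2 := hL (d, χ d + δ / (-c)) (by simp only [hS, Set.mem_setOf_eq]; linarith)
    rw [hsplit d (χ d + δ / (-c)), hsplit 0 (χ 0)] at h2
    have hcne : (-c) ≠ 0 := by linarith
    have h9 : δ / (-c) * (-c) = δ := div_mul_cancel₀ δ hcne
    have hmul : (χ d + δ / (-c)) * c = χ d * c - δ := by linear_combination -h9
    rw [hmul] at h2
    linarith
  have hL00 : L ((0 : E), (0 : ℝ)) = 0 := by
    have : ((0 : E), (0 : ℝ)) = (0 : E × ℝ) := rfl
    rw [this, map_zero]
  refine ⟨(InnerProductSpace.toDual ℝ E).symm ((-c)⁻¹ • (L.comp (ContinuousLinearMap.inl ℝ E ℝ))),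
    fun d => ?_⟩
  rw [InnerProductSpace.toDual_symm_apply]
  have happ : ((-c)⁻¹ • (L.comp (ContinuousLinearMap.inl ℝ E ℝ))) d = (-c)⁻¹ * L (d, 0) := rfl
  rw [happ]
  have hk := key d
  rw [hL00] at hk
  have hcpos : (0 : ℝ) < -c := by linarith
  rw [← sub_nonneg]
  have hcne : c ≠ 0 := ne_of_lt hc
  have hexp : χ d - (χ 0 + (-c)⁻¹ * L (d, 0)) = (-c)⁻¹ * ((-c) * (χ d - χ 0) - L (d, 0)) := by
    field_simp
    ring
  rw [hexp]
  apply mul_nonneg (le_of_lt (inv_pos.2 hcpos))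
  nlinarith [hk]

/-- Lemma 4.3: for a convex `f`, `g` is an `(ε,η)`-subgradient of `f` at `x̄` iff
`g = ḡ + v` with `ḡ` an `ε`-subgradient and `‖v‖ ≤ η`, i.e.
`∂_ε^η f(x̄) = ∂_ε f(x̄) + B_η`. -/
theorem eps_eta_subgradient_iff
    (n : ℕ) (hn : 1 ≤ n) (f : EuclideanSpace ℝ (Fin n) → ℝ)
    (hf : ConvexOn ℝ Set.univ f)
    (xbar : EuclideanSpace ℝ (Fin n)) (ε η : ℝ) (hε : 0 ≤ ε) (hη : 0 ≤ η)
    (g : EuclideanSpace ℝ (Fin n)) :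
    (∀ x, f x ≥ f xbar + ⟪g, x - xbar⟫ - η * ‖x - xbar‖ - ε) ↔
      (∃ gbar : EuclideanSpace ℝ (Fin n),
        (∀ x, f x ≥ f xbar + ⟪gbar, x - xbar⟫ - ε) ∧ ‖g - gbar‖ ≤ η) := by
  constructor
  · intro h
    set ψ : EuclideanSpace ℝ (Fin n) → ℝ :=
      fun d => f (xbar + d) - f xbar - ⟪g, d⟫ + ε with hψdef
    have hψ0 : ψ 0 = ε := by simp [hψdef]
    have hψlb : ∀ d, -(η * ‖d‖) ≤ ψ d := by
      intro d
      have h1 := h (xbar + d)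
      have h2 : xbar + d - xbar = d := by abel
      rw [h2] at h1
      simp only [hψdef]
      linarith
    have hψconv : ∀ (u v : EuclideanSpace ℝ (Fin n)) (a b : ℝ), 0 ≤ a → 0 ≤ b → a + b = 1 →
        ψ (a • u + b • v) ≤ a * ψ u + b * ψ v := by
      intro u v a b ha hb hab
      have hxeq : xbar + (a • u + b • v) = a • (xbar + u) + b • (xbar + v) := by
        have h1 : a = 1 - b := by linarith
        subst h1
        module
      have hfc : f (xbar + (a • u + b • v)) ≤ a * f (xbar + u) + b * f (xbar + v) := by
        rw [hxeq]
        exact hf.2 (Set.mem_univ _) (Set.mem_univ _) ha hb hab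
      have hinner : ⟪g, a • u + b • v⟫ = a * ⟪g, u⟫ + b * ⟪g, v⟫ := by
        rw [inner_add_right, real_inner_smul_right, real_inner_smul_right]
      have hfb : a * f xbar + b * f xbar = f xbar := by rw [← add_mul, hab, one_mul]
      have heb : a * ε + b * ε = ε := by rw [← add_mul, hab, one_mul]
      simp only [hψdef]
      rw [hinner]
      nlinarith [hfc]
    set G : EuclideanSpace ℝ (Fin n) → EuclideanSpace ℝ (Fin n) → ℝ :=
      fun d u => ψ u + η * ‖d - u‖ with hGdef
    have hGlb : ∀ d u, -(η * ‖d‖) ≤ G d u := by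
      intro d u
      have h1 := hψlb u
      have h2 : ‖u‖ - ‖d‖ ≤ ‖d - u‖ := by
        rw [norm_sub_rev]
        exact (norm_sub_norm_le u d).trans_eq rfl
      have h3 := mul_le_mul_of_nonneg_left h2 hη
      simp only [hGdef]
      nlinarith [h1, h3]
    have hbdd : ∀ d, BddBelow (Set.range (G d)) := fun d =>
      ⟨-(η * ‖d‖), by rintro x ⟨u, rfl⟩; exact hGlb d u⟩
    have hne : ∀ d, (Set.range (G d)).Nonempty := fun d => ⟨G d d, ⟨d, rfl⟩⟩
    set χ : EuclideanSpace ℝ (Fin n) → ℝ := fun d => sInf (Set.range (G d)) with hχdef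
    have hχle : ∀ d u, χ d ≤ G d u := fun d u => csInf_le (hbdd d) ⟨u, rfl⟩
    have hχ0 : 0 ≤ χ 0 := by
      apply le_csInf (hne 0)
      rintro x ⟨u, rfl⟩
      have h1 := hψlb u
      have h2 : G 0 u = ψ u + η * ‖u‖ := by
        simp only [hGdef, zero_sub, norm_neg]
      rw [h2]; linarith
    have hχub : ∀ d, χ d ≤ ε + η * ‖d‖ := by
      intro d
      have h1 := hχle d 0
      have h2 : G d 0 = ε + η * ‖d‖ := by simp only [hGdef, sub_zero, hψ0]
      rw [h2] at h1; exact h1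
    have hχψ : ∀ d, χ d ≤ ψ d := by
      intro d
      have h1 := hχle d d
      have h2 : G d d = ψ d := by simp [hGdef]
      rw [h2] at h1; exact h1
    have hχapp : ∀ d, χ d = sInf (Set.range (G d)) := fun d => rfl
    have hψeq : ∀ d, ψ d = f (xbar + d) - f xbar - ⟪g, d⟫ + ε := fun d => rfl
    have hGapp : ∀ d u, G d u = ψ u + η * ‖d - u‖ := fun d u => rfl
    clear_value χ G ψ
    have hχconv : ConvexOn ℝ Set.univ χ := by
      refine ⟨convex_univ, ?_⟩
      rintro x - y - a b ha hb hab
      simp only [smul_eq_mul]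
      refine le_of_forall_pos_le_add' fun δ hδ => ?_
      obtain ⟨p, ⟨u, rfl⟩, hpu⟩ := Real.lt_sInf_add_pos (hne x) (half_pos hδ)
      obtain ⟨q, ⟨v, rfl⟩, hqv⟩ := Real.lt_sInf_add_pos (hne y) (half_pos hδ)
      rw [← hχapp x] at hpu
      rw [← hχapp y] at hqv
      have step : χ (a • x + b • y) ≤ G (a • x + b • y) (a • u + b • v) := hχle _ _
      have hvec : (a • x + b • y) - (a • u + b • v) = a • (x - u) + b • (y - v) := by module
      have hnrm : ‖(a • x + b • y) - (a • u + b • v)‖ ≤ a * ‖x - u‖ + b * ‖y - v‖ := by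
        rw [hvec]
        calc ‖a • (x - u) + b • (y - v)‖ ≤ ‖a • (x - u)‖ + ‖b • (y - v)‖ := norm_add_le _ _
          _ = a * ‖x - u‖ + b * ‖y - v‖ := by
              rw [norm_smul, norm_smul, Real.norm_of_nonneg ha, Real.norm_of_nonneg hb]
      have hψs := hψconv u v a b ha hb hab
      have hGx := hGapp x u
      have hGy := hGapp y v
      have hGxy := hGapp (a • x + b • y) (a • u + b • v)
      have hG1 : G (a • x + b • y) (a • u + b • v) ≤ a * G x u + b * G y v := by
        rw [hGx, hGy, hGxy]
        have h4 := mul_le_mul_of_nonneg_left hnrm hη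
        nlinarith [hψs, h4]
      have h5 : a * G x u ≤ a * (χ x + δ / 2) := mul_le_mul_of_nonneg_left hpu.le ha
      have h6 : b * G y v ≤ b * (χ y + δ / 2) := mul_le_mul_of_nonneg_left hqv.le hb
      have h8 : a * (χ x + δ / 2) + b * (χ y + δ / 2) = a * χ x + b * χ y + δ / 2 := by
        linear_combination (δ / 2) * hab
      have final : a * G x u + b * G y v ≤ a * χ x + b * χ y + δ / 2 := by linarith
      exact ((step.trans hG1).trans final).trans (by linarith)
    obtain ⟨w, hw⟩ := exists_subgradient_at_zero χ hχconv
    have hwle : ∀ d, ⟪w, d⟫ ≤ η * ‖d‖ := by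
      intro d
      refine le_of_forall_pos_le_add' fun δ hδ => ?_
      set t : ℝ := ε / δ + 1 with htdef
      have ht : (0 : ℝ) < t := by positivity
      have h1 := hw (t • d)
      have h2 := hχub (t • d)
      rw [real_inner_smul_right] at h1
      rw [norm_smul, Real.norm_of_nonneg ht.le] at h2
      have h3 : t * ⟪w, d⟫ ≤ ε + η * (t * ‖d‖) := by linarith
      have hδne : δ ≠ 0 := ne_of_gt hδ
      have h4 : t * δ = ε + δ := by rw [htdef]; field_simp
      have h5 : t * ⟪w, d⟫ ≤ t * (η * ‖d‖ + δ) := by nlinarith [h3, h4, hδ]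
      exact le_of_mul_le_mul_left h5 ht
    have hwnorm : ‖w‖ ≤ η := by
      rcases eq_or_lt_of_le (norm_nonneg w) with h0 | h0
      · rw [← h0]; exact hη
      · have h1 := hwle w
        rw [real_inner_self_eq_norm_mul_norm] at h1
        nlinarith
    refine ⟨g + w, fun x => ?_, ?_⟩
    · have h1 := hw (x - xbar)
      have h2 := hχψ (x - xbar)
      have h3 : ψ (x - xbar) = f x - f xbar - ⟪g, x - xbar⟫ + ε := by
        rw [hψeq, add_sub_cancel]
      have h4 : ⟪g + w, x - xbar⟫ = ⟪g, x - xbar⟫ + ⟪w, x - xbar⟫ := inner_add_left _ _ _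
      rw [ge_iff_le, h4]
      rw [h3] at h2
      linarith
    · have : g - (g + w) = -w := by abel
      rw [this, norm_neg]
      exact hwnorm
  · rintro ⟨gbar, hgbar, hng⟩ x
    have h1 := hgbar x
    have h2 : ⟪g - gbar, x - xbar⟫ ≤ η * ‖x - xbar‖ :=
      (real_inner_le_norm _ _).trans (mul_le_mul_of_nonneg_right hng (norm_nonneg _))
    have h3 : ⟪g, x - xbar⟫ = ⟪gbar, x - xbar⟫ + ⟪g - gbar, x - xbar⟫ := by
      have hsum : gbar + (g - gbar) = g := by abel
      rw [← inner_add_left, hsum]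
    rw [ge_iff_le] at h1 ⊢
    rw [h3]
    linarith
end

section
/- Let n ≥ 1 and let f : ℝⁿ → ℝ be differentiable with gradient ∇f Lipschitz continuous with constant L ≥ 0. Let y₀, y₁, …, y_n ∈ ℝⁿ and ε > 0 be such that ‖y_i − y₀‖ ≤ ε for i = 1, …, n, and such that the n×n real matrix M whose i-th row is (y_i − y₀)ᵀ is invertible. Define δf ∈ ℝⁿ by (δf)_i = f(y_i) − f(y₀) and the simplex gradient ∇_ε f(Y) = M⁻¹ δf. Then ‖∇_ε f(Y) − ∇f(y₀)‖ ≤ (√n · L / 2) · ε² · ‖M⁻¹‖, where ‖M⁻¹‖ denotes the operator norm of M⁻¹ induced by the Euclidean norm. (This is the simplex-gradient error bound, Theorem 3.2 of the paper, with the explicit constant μ = √n L/2 and ε‖M̂⁻¹‖ = ε²‖M⁻¹‖ for M̂ = M/ε.) -/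
open scoped RealInnerProductSpace Matrix.Norms.L2Operator
open scoped Matrix

/-! Since `M` has rows `(y i - y₀)ᵀ`, the error `M⁻¹ δf - ∇f(y₀)` equals `M⁻¹ r` for the residual
`r i = f (y i) - f y₀ - ⟪∇f(y₀), y i - y₀⟫` of the first-order Taylor expansion. The descent
lemma bounds each `|r i|` by `L ε² / 2`, so `‖r‖ ≤ √n L ε² / 2`, and `‖M⁻¹ r‖ ≤ ‖M⁻¹‖ ‖r‖`. -/

section Descent

variable {E : Type*} [NormedAddCommGroup E] [InnerProductSpace ℝ E] [CompleteSpace E]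

theorem HasGradientAt.hasDerivAt_comp_add_smul {f : E → ℝ} {g x h : E} {t : ℝ}
    (hf : HasGradientAt f g (x + t • h)) :
    HasDerivAt (fun s : ℝ => f (x + s • h)) ⟪g, h⟫ t := by
  have hline : HasDerivAt (fun s : ℝ => x + s • h) h t := by
    simpa using ((hasDerivAt_id t).smul_const h).const_add x
  simpa [InnerProductSpace.toDual_apply_apply, Function.comp_def] using
    (hasGradientAt_iff_hasFDerivAt.mp hf).comp_hasDerivAt t hline

-- The descent lemma: the Taylor remainder `φ` along `t ↦ x + t • h` has `|φ'(t)| ≤ L ‖h‖² t`,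
-- so it is fenced in by the parabola `L ‖h‖² t² / 2`.
theorem abs_sub_sub_inner_gradient_le {f : E → ℝ} (hf : Differentiable ℝ f) {L : ℝ}
    (hlip : ∀ x y, ‖gradient f x - gradient f y‖ ≤ L * ‖x - y‖) (x h : E) :
    |f (x + h) - f x - ⟪gradient f x, h⟫| ≤ L / 2 * ‖h‖ ^ 2 := by
  set φ : ℝ → ℝ := fun t => f (x + t • h) - f x - t * ⟪gradient f x, h⟫
  set φ' : ℝ → ℝ := fun t => ⟪gradient f (x + t • h) - gradient f x, h⟫
  have hφ : ∀ t, HasDerivAt φ (φ' t) t := fun t => by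
    simpa [φ, φ', inner_sub_left, Pi.sub_def] using
      (((hf _).hasGradientAt.hasDerivAt_comp_add_smul).sub_const (f x)).sub
        ((hasDerivAt_id t).mul_const ⟪gradient f x, h⟫)
  have hB : ∀ t, HasDerivAt (fun t => L * ‖h‖ ^ 2 / 2 * t ^ 2) (L * ‖h‖ ^ 2 * t) t := fun t =>
    ((hasDerivAt_pow 2 t).const_mul (L * ‖h‖ ^ 2 / 2)).congr_deriv (by ring)
  have hφ'_le : ∀ t ∈ Set.Ico (0 : ℝ) 1, ‖φ' t‖ ≤ L * ‖h‖ ^ 2 * t := fun t ht => by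
    calc ‖φ' t‖ ≤ ‖gradient f (x + t • h) - gradient f x‖ * ‖h‖ := norm_inner_le_norm _ _
      _ ≤ L * ‖t • h‖ * ‖h‖ := by gcongr; simpa using hlip (x + t • h) x
      _ = L * ‖h‖ ^ 2 * t := by rw [norm_smul, Real.norm_of_nonneg ht.1]; ring
  have := image_norm_le_of_norm_deriv_right_le_deriv_boundary
    (fun t _ => (hφ t).continuousAt.continuousWithinAt) (fun t _ => (hφ t).hasDerivWithinAt)
    (by simp [φ]) hB hφ'_le (Set.right_mem_Icc.mpr zero_le_one)
  simpa [φ, Real.norm_eq_abs, div_mul_eq_mul_div] using this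

end Descent

theorem EuclideanSpace.norm_le_sqrt_card_mul {ι : Type*} [Fintype ι] (v : EuclideanSpace ℝ ι)
    {c : ℝ} (hc : 0 ≤ c) (hv : ∀ i, |v i| ≤ c) : ‖v‖ ≤ √(Fintype.card ι) * c := by
  calc ‖v‖ = √(∑ i, ‖v i‖ ^ 2) := EuclideanSpace.norm_eq v
    _ ≤ √(∑ _ : ι, c ^ 2) := by
      gcongr with i
      exact hv i
    _ = √(Fintype.card ι) * c := by simp [Real.sqrt_mul, Real.sqrt_sq hc]

theorem Matrix.inv_mulVec_sub {m R : Type*} [Fintype m] [DecidableEq m] [CommRing R]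
    {M : Matrix m m R} (hM : IsUnit M) (v w : m → R) :
    M⁻¹ *ᵥ v - w = M⁻¹ *ᵥ (v - M *ᵥ w) := by
  rw [Matrix.mulVec_sub, Matrix.mulVec_mulVec,
    Matrix.nonsing_inv_mul _ ((Matrix.isUnit_iff_isUnit_det M).mp hM), Matrix.one_mulVec]

theorem simplex_gradient_error_bound_general
    (n : ℕ) (f : EuclideanSpace ℝ (Fin n) → ℝ)
    (hf : Differentiable ℝ f) (L : ℝ) (hL : 0 ≤ L)
    (hlip : ∀ x y : EuclideanSpace ℝ (Fin n),
      ‖gradient f x - gradient f y‖ ≤ L * ‖x - y‖)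
    (y₀ : EuclideanSpace ℝ (Fin n)) (y : Fin n → EuclideanSpace ℝ (Fin n))
    (ε : ℝ) (hdiam : ∀ i, ‖y i - y₀‖ ≤ ε)
    (M : Matrix (Fin n) (Fin n) ℝ) (hM : ∀ i j, M i j = (y i - y₀) j)
    (hMinv : IsUnit M)
    (δf : Fin n → ℝ) (hδf : ∀ i, δf i = f (y i) - f y₀)
    (gε : EuclideanSpace ℝ (Fin n)) (hgε : ∀ i, gε i = (M⁻¹ *ᵥ δf) i) :
    ‖gε - gradient f y₀‖ ≤ (Real.sqrt n * L / 2) * ε ^ 2 * ‖M⁻¹‖ := by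
  set g := gradient f y₀
  set r : EuclideanSpace ℝ (Fin n) := (EuclideanSpace.equiv (Fin n) ℝ).symm (δf - M *ᵥ g)
  have hr : ∀ i, |r i| ≤ L / 2 * ε ^ 2 := fun i => by
    have hMg : (M *ᵥ g) i = ⟪g, y i - y₀⟫ := by
      simp [Matrix.mulVec, dotProduct, PiLp.inner_apply, hM]
    calc |r i| = |f (y₀ + (y i - y₀)) - f y₀ - ⟪g, y i - y₀⟫| := by
          simp [r, hδf, hMg]
      _ ≤ L / 2 * ‖y i - y₀‖ ^ 2 := abs_sub_sub_inner_gradient_le hf hlip _ _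
      _ ≤ L / 2 * ε ^ 2 := by gcongr; exact hdiam i
  have hgε_sub : gε - g = (EuclideanSpace.equiv (Fin n) ℝ).symm (M⁻¹ *ᵥ r) := by
    ext i
    simp [hgε, r, EuclideanSpace.equiv, ← Matrix.inv_mulVec_sub hMinv]
  calc ‖gε - g‖ ≤ ‖M⁻¹‖ * ‖r‖ := hgε_sub ▸ Matrix.l2_opNorm_mulVec M⁻¹ r
    _ ≤ ‖M⁻¹‖ * (√n * (L / 2 * ε ^ 2)) := by
      gcongr
      simpa using EuclideanSpace.norm_le_sqrt_card_mul r (by positivity) hr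
    _ = (Real.sqrt n * L / 2) * ε ^ 2 * ‖M⁻¹‖ := by ring

/-- Theorem 3.2: simplex-gradient error bound. If `∇f` is `L`-Lipschitz, the points
`y₀, y₁, …, y_n` have `‖y i - y₀‖ ≤ ε` and the matrix `M` with rows `(y i - y₀)ᵀ` is
invertible, then the simplex gradient `M⁻¹ δf` satisfies
`‖M⁻¹ δf - ∇f(y₀)‖ ≤ (√n · L / 2) · ε² · ‖M⁻¹‖`. -/
theorem simplex_gradient_error_bound
    (n : ℕ) (hn : 1 ≤ n) (f : EuclideanSpace ℝ (Fin n) → ℝ)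
    (hf : Differentiable ℝ f) (L : ℝ) (hL : 0 ≤ L)
    (hlip : ∀ x y : EuclideanSpace ℝ (Fin n),
      ‖gradient f x - gradient f y‖ ≤ L * ‖x - y‖)
    (y₀ : EuclideanSpace ℝ (Fin n)) (y : Fin n → EuclideanSpace ℝ (Fin n))
    (ε : ℝ) (hε : 0 < ε) (hdiam : ∀ i, ‖y i - y₀‖ ≤ ε)
    (M : Matrix (Fin n) (Fin n) ℝ) (hM : ∀ i j, M i j = (y i - y₀) j)
    (hMinv : IsUnit M)
    (δf : Fin n → ℝ) (hδf : ∀ i, δf i = f (y i) - f y₀)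
    (gε : EuclideanSpace ℝ (Fin n)) (hgε : ∀ i, gε i = (M⁻¹ *ᵥ δf) i) :
    ‖gε - gradient f y₀‖ ≤ (Real.sqrt n * L / 2) * ε ^ 2 * ‖M⁻¹‖ :=
  simplex_gradient_error_bound_general n f hf L hL hlip y₀ y ε hdiam M hM hMinv δf hδf gε hgε
end

section
/- Let n ≥ 1, let f : ℝⁿ → ℝ, let x, x' ∈ ℝⁿ, let r > 0, 0 < m < 1, ε ≥ 0 and p ∈ ℝ, and set s = r(x − x'). Suppose that (A) f(x) ≥ p + ⟨s, x − x'⟩, (B) p − f(x') ≥ −ε²/r, and (C) f(x) − f(x') < (m/(2r))‖s‖². Then ε² > (1 − m/2)‖s‖², and hence ε > (1 − m/2)^{1/2}‖s‖. (This is Lemma 5.5 of the paper: at every null step of the DFO-VU algorithm, the subgradient accuracy parameter ε dominates a fixed multiple of the norm of the aggregate subgradient s.) -/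
open scoped RealInnerProductSpace

/-- Lemma 5.5: at a null step of the DFO-VU algorithm, the accuracy parameter `ε`
dominates a fixed multiple of the norm of the aggregate subgradient `s`:
`ε² > (1 - m/2)‖s‖²` and hence `ε > (1 - m/2)^{1/2}‖s‖`. -/
theorem null_step_epsilon_bound
    (n : ℕ) (hn : 1 ≤ n) (f : EuclideanSpace ℝ (Fin n) → ℝ)
    (x x' : EuclideanSpace ℝ (Fin n)) (r m ε p : ℝ)
    (hr : 0 < r) (hm0 : 0 < m) (hm1 : m < 1) (hε : 0 ≤ ε)
    (s : EuclideanSpace ℝ (Fin n)) (hs : s = r • (x - x'))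
    (hA : f x ≥ p + ⟪s, x - x'⟫)
    (hB : p - f x' ≥ -(ε ^ 2 / r))
    (hC : f x - f x' < m / (2 * r) * ‖s‖ ^ 2) :
    ε ^ 2 > (1 - m / 2) * ‖s‖ ^ 2 ∧ ε > Real.sqrt (1 - m / 2) * ‖s‖ := by
  have hip : ⟪s, x - x'⟫ = ‖s‖ ^ 2 / r := by
    subst hs
    rw [real_inner_smul_left, real_inner_self_eq_norm_sq, norm_smul]
    rw [Real.norm_eq_abs, abs_of_pos hr]
    field_simp
  have h1 : ε ^ 2 > (1 - m / 2) * ‖s‖ ^ 2 := by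
    rw [hip] at hA
    have := mul_lt_mul_of_pos_left hC hr
    have hr' : r ≠ 0 := ne_of_gt hr
    have e1 : r * (m / (2 * r) * ‖s‖ ^ 2) = m / 2 * ‖s‖ ^ 2 := by field_simp
    have e2 : r * (‖s‖ ^ 2 / r) = ‖s‖ ^ 2 := by field_simp
    have e3 : r * (ε ^ 2 / r) = ε ^ 2 := by field_simp
    nlinarith [mul_le_mul_of_nonneg_left hB hr.le, mul_le_mul_of_nonneg_left hA hr.le]
  refine ⟨h1, ?_⟩
  have hms : 0 ≤ 1 - m / 2 := by linarith
  have h2 : (Real.sqrt (1 - m / 2) * ‖s‖) ^ 2 = (1 - m / 2) * ‖s‖ ^ 2 := by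
    rw [mul_pow, Real.sq_sqrt hms]
  have hnn : 0 ≤ Real.sqrt (1 - m / 2) * ‖s‖ :=
    mul_nonneg (Real.sqrt_nonneg _) (norm_nonneg _)
  nlinarith [h1, h2, hnn, hε]
end

section
/- Let n ≥ 1, let f : ℝⁿ → ℝ, let r > 0 and 0 < m < 1, let (x_k) and (s_k) be sequences in ℝⁿ, and let (ε_k) be a sequence of nonnegative reals with ε_k → 0. Suppose that for every k: (A) f(x_k) − f(x_{k+1}) ≥ ‖s_{k+1}‖²/r − ε_k²/r, and (B) f(x_k) − f(x_{k+1}) < (m/(2r))‖s_{k+1}‖². Then ‖s_k‖ → 0. (This is Corollary 5.6 of the paper: if from some iteration onward the DFO-VU algorithm takes only null steps while the accuracy parameters ε_k tend to zero, then the aggregate subgradients s_k tend to zero.) -/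
open scoped RealInnerProductSpace

/-- Corollary 5.6: if from some iteration onward only null steps are taken while the
accuracy parameters `ε_k` tend to zero, then the aggregate subgradients tend to zero. -/
theorem null_steps_aggregate_to_zero
    (n : ℕ) (hn : 1 ≤ n) (f : EuclideanSpace ℝ (Fin n) → ℝ)
    (r m : ℝ) (hr : 0 < r) (hm0 : 0 < m) (hm1 : m < 1)
    (x s : ℕ → EuclideanSpace ℝ (Fin n)) (ε : ℕ → ℝ)
    (hε0 : ∀ k, 0 ≤ ε k)
    (hεlim : Filter.Tendsto ε Filter.atTop (nhds 0))
    (hA : ∀ k, f (x k) - f (x (k + 1)) ≥ ‖s (k + 1)‖ ^ 2 / r - (ε k) ^ 2 / r)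
    (hB : ∀ k, f (x k) - f (x (k + 1)) < m / (2 * r) * ‖s (k + 1)‖ ^ 2) :
    Filter.Tendsto (fun k => ‖s k‖) Filter.atTop (nhds 0) := by
  have hc : (0:ℝ) < 1 - m / 2 := by linarith
  have key : ∀ k, ‖s (k + 1)‖ ≤ ε k / Real.sqrt (1 - m / 2) := by
    intro k
    have h1 := hA k
    have h2 := hB k
    have h3 : (1 - m / 2) * ‖s (k + 1)‖ ^ 2 ≤ ε k ^ 2 := by
      have h4 : ‖s (k + 1)‖ ^ 2 / r - ε k ^ 2 / r < m / (2 * r) * ‖s (k + 1)‖ ^ 2 := by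
        linarith
      rw [div_sub_div_same, div_lt_iff₀ hr, div_mul_eq_mul_div, div_mul_eq_mul_div,
        lt_div_iff₀ (by positivity : (0:ℝ) < 2 * r)] at h4
      nlinarith
    have hs : Real.sqrt (1 - m / 2) * ‖s (k + 1)‖ ≤ ε k := by
      have := Real.sqrt_le_sqrt h3
      rwa [Real.sqrt_mul hc.le, Real.sqrt_sq (norm_nonneg _),
        Real.sqrt_sq (hε0 k)] at this
    rw [le_div_iff₀ (Real.sqrt_pos.mpr hc)]
    linarith [hs]
  have hlim2 : Filter.Tendsto (fun k => ‖s (k + 1)‖) Filter.atTop (nhds 0) := by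
    have hεl : Filter.Tendsto (fun k => ε k / Real.sqrt (1 - m / 2)) Filter.atTop (nhds 0) := by
      simpa using hεlim.div_const (Real.sqrt (1 - m / 2))
    exact squeeze_zero (fun k => norm_nonneg _) key hεl
  rw [← Filter.tendsto_add_atTop_iff_nat 1]
  exact hlim2
end

section
/- Let n ≥ 1, let f : ℝⁿ → ℝ be convex and continuous, and let K ≥ 0 and r > 0. Let (x_j), (s_j) be sequences in ℝⁿ and (ε_j) a sequence of nonnegative reals such that x_j → x̄, s_j → 0, ε_j → 0, and for every j, f(x) ≥ f(x_j) + ⟨s_j, x − x_j⟩ − ε_j K‖x − x_j‖ − ε_j²/r for all x ∈ ℝⁿ (i.e. s_j ∈ ∂_{ε_j²/r}^{ε_j K} f(x_j)). Then 0 ∈ ∂f(x̄); that is, x̄ is a global minimizer of f: f(x) ≥ f(x̄) for all x ∈ ℝⁿ. (This is the final claim of Theorem 5.8 of the paper: any cluster point x̄ of a subsequence (x_{k_j}) of DFO-VU iterates along which the aggregate subgradients s_{k_j} tend to 0 satisfies 0 ∈ ∂f(x̄).) -/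
open scoped RealInnerProductSpace

/-- Final claim of Theorem 5.8: if along a subsequence the iterates `x_j` converge to
`x̄`, the aggregate subgradients `s_j ∈ ∂_{ε_j²/r}^{ε_j K} f(x_j)` tend to `0`, and
`ε_j → 0`, then `0 ∈ ∂f(x̄)`, i.e. `x̄` is a global minimizer of `f`. -/
theorem cluster_point_is_minimizer
    (n : ℕ) (hn : 1 ≤ n) (f : EuclideanSpace ℝ (Fin n) → ℝ)
    (hconv : ConvexOn ℝ Set.univ f) (hcont : Continuous f)
    (K r : ℝ) (hK : 0 ≤ K) (hr : 0 < r)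
    (x s : ℕ → EuclideanSpace ℝ (Fin n)) (ε : ℕ → ℝ)
    (hε0 : ∀ j, 0 ≤ ε j)
    (xbar : EuclideanSpace ℝ (Fin n))
    (hx : Filter.Tendsto x Filter.atTop (nhds xbar))
    (hs : Filter.Tendsto s Filter.atTop (nhds (0 : EuclideanSpace ℝ (Fin n))))
    (hεlim : Filter.Tendsto ε Filter.atTop (nhds 0))
    (hsub : ∀ j, ∀ y, f y ≥ f (x j) + ⟪s j, y - x j⟫
      - ε j * K * ‖y - x j‖ - (ε j) ^ 2 / r) :
    ∀ y, f y ≥ f xbar := by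
  intro y
  have hlim : Filter.Tendsto
      (fun j => f (x j) + ⟪s j, y - x j⟫ - ε j * K * ‖y - x j‖ - (ε j) ^ 2 / r)
      Filter.atTop
      (nhds (f xbar + ⟪(0 : EuclideanSpace ℝ (Fin n)), y - xbar⟫
        - 0 * K * ‖y - xbar‖ - (0 : ℝ) ^ 2 / r)) := by
    apply Filter.Tendsto.sub
    apply Filter.Tendsto.sub
    · exact ((hcont.continuousAt.tendsto.comp hx).add
        (hs.inner (tendsto_const_nhds.sub hx)))
    · exact (hεlim.mul_const K).mul (tendsto_const_nhds.sub hx).norm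
    · exact ((hεlim.pow 2).div_const r)
  simp only [inner_zero_left, zero_mul, zero_pow, add_zero, sub_zero, zero_div,
    ne_eq, OfNat.ofNat_ne_zero, not_false_eq_true] at hlim
  exact le_of_tendsto hlim (Filter.Eventually.of_forall fun j => hsub j y)
end
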